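/- arXiv:1202.2456 — 2 statements merged into one kernel-verified Lean document; each statement's English description precedes it below -/
import Mathlib

section
/- Let ν₁ > ν₂ ≥ 1 and E ∈ ℝ with ν₁ + ν₂ ≤ 2E. Define D = {(λ₁, λ₂) ∈ ℝ² : λ₁ ≥ 1, λ₂ ≥ 1, |4E − (λ₁ + λ₂)(ν₁ + ν₂)| ≤ |λ₁ − λ₂|(ν₁ − ν₂)}. Then the two-dimensional Lebesgue measure of D equals (ν₁ − ν₂)·(2E − (ν₁ + ν₂))² / (ν₁ ν₂ (ν₁ + ν₂)). -/
/-!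
With `a = ν₁λ₁ + ν₂λ₂` and `b = ν₂λ₁ + ν₁λ₂`, the defining inequality of `D` says exactly that
`2E` lies between `a` and `b`. The domain is symmetric under `λ₁ ↔ λ₂` and the diagonal is null,
so its area is twice that of the half `λ₁ ≤ λ₂`. That half is the triangle over
`λ₁ ∈ [1, 2E/(ν₁+ν₂)]` between the lines `a = 2E` and `b = 2E`, whose vertical width decreases
linearly to `0` at `λ₁ = 2E/(ν₁+ν₂)`; integrating the width gives the result.
-/

open MeasureTheory Set

theorem abs_two_mul_sub_add_le_abs_sub_iff {a b c : ℝ} :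
    |2 * c - (a + b)| ≤ |a - b| ↔ c ∈ uIcc a b := by
  rcases le_total a b with hab | hba
  · rw [uIcc_of_le hab, abs_of_nonpos (sub_nonpos.2 hab), abs_le, mem_Icc]
    constructor <;> intro h <;> constructor <;> linarith [h.1, h.2]
  · rw [uIcc_of_ge hba, abs_of_nonneg (sub_nonneg.2 hba), abs_le, mem_Icc]
    constructor <;> intro h <;> constructor <;> linarith [h.1, h.2]

namespace MeasureTheory.Measure

variable {μ : Measure ℝ}

theorem prod_diagonal_eq_zero [SFinite μ] [NullSingletonClass μ] (ν : Measure ℝ) :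
    (ν.prod μ) (diagonal ℝ) = 0 := by
  rw [prod_apply measurableSet_diagonal]
  simp [diagonal]

theorem prod_self_eq_two_mul_of_preimage_swap_eq [SFinite μ] [NullSingletonClass μ]
    {S : Set (ℝ × ℝ)} (hS : MeasurableSet S) (hswap : Prod.swap ⁻¹' S = S) :
    (μ.prod μ) S = 2 * (μ.prod μ) (S ∩ {p | p.1 ≤ p.2}) := by
  set H := S ∩ {p : ℝ × ℝ | p.1 ≤ p.2}
  have hH : MeasurableSet H := hS.inter (measurableSet_le measurable_fst measurable_snd)
  have hcover : S = H ∪ Prod.swap ⁻¹' H := by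
    have hmem (p : ℝ × ℝ) : p.swap ∈ S ↔ p ∈ S := Set.ext_iff.1 hswap p
    ext p
    rcases le_total p.1 p.2 with h | h <;> simp +contextual [H, h, hmem]
  have hdisj : AEDisjoint (μ.prod μ) H (Prod.swap ⁻¹' H) := by
    refine measure_mono_null (fun p hp => ?_) (prod_diagonal_eq_zero μ)
    exact le_antisymm hp.1.2 hp.2.2
  rw [two_mul, hcover, measure_union₀ (hH.preimage measurable_swap).nullMeasurableSet hdisj,
    measurePreserving_swap.measure_preimage hH.nullMeasurableSet]

end MeasureTheory.Measure

theorem volume_region_between_cc_eq_lintegral {α : Type*} [MeasurableSpace α] {μ : Measure α}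
    {f g : α → ℝ} {s : Set α} (hf : Measurable f) (hg : Measurable g) (hs : MeasurableSet s) :
    μ.prod volume {p : α × ℝ | p.1 ∈ s ∧ p.2 ∈ Icc (f p.1) (g p.1)} =
      ∫⁻ x in s, ENNReal.ofReal (g x - f x) ∂μ := by
  rw [Measure.prod_apply (measurableSet_region_between_cc hf hg hs), ← lintegral_indicator hs]
  congr 1 with x
  by_cases hx : x ∈ s <;> simp [hx, Icc_def]

theorem lintegral_Ici_ofReal_mul_sub {a b k : ℝ} (hk : 0 ≤ k) (hab : a ≤ b) :
    ∫⁻ x in Ici a, ENNReal.ofReal (k * (b - x)) = ENNReal.ofReal (k * (b - a) ^ 2 / 2) := by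
  have hright : ∫⁻ x in Ioi b, ENNReal.ofReal (k * (b - x)) = 0 := by
    refine setLIntegral_eq_zero measurableSet_Ioi fun x hx => ?_
    exact ENNReal.ofReal_eq_zero.2 (mul_nonpos_of_nonneg_of_nonpos hk (by linarith [mem_Ioi.1 hx]))
  have hnonneg : 0 ≤ᵐ[volume.restrict (Icc a b)] fun x => k * (b - x) :=
    (ae_restrict_iff' measurableSet_Icc).2 <| .of_forall fun x hx =>
      mul_nonneg hk (sub_nonneg.2 hx.2)
  rw [← Icc_union_Ioi_eq_Ici hab, lintegral_union measurableSet_Ioi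
      ((Iic_disjoint_Ioi le_rfl).mono_left Icc_subset_Iic_self), hright, add_zero,
    ← ofReal_integral_eq_lintegral_ofReal
      (by fun_prop : Continuous fun x : ℝ => k * (b - x)).integrableOn_Icc hnonneg,
    integral_Icc_eq_integral_Ioc, ← intervalIntegral.integral_of_le hab]
  congr 1
  simp only [intervalIntegral.integral_const_mul]
  rw [intervalIntegral.integral_sub intervalIntegrable_const intervalIntegral.intervalIntegrable_id,
    intervalIntegral.integral_const, integral_id, smul_eq_mul]
  ring

/-- The domain `D`, with `p = (λ₁, λ₂)`. -/
def energyDomain (ν₁ ν₂ E : ℝ) : Set (ℝ × ℝ) :=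
  {p | 1 ≤ p.1 ∧ 1 ≤ p.2 ∧ |4 * E - (p.1 + p.2) * (ν₁ + ν₂)| ≤ |p.1 - p.2| * (ν₁ - ν₂)}

section energyDomain

variable {ν₁ ν₂ E : ℝ}

theorem measurableSet_energyDomain : MeasurableSet (energyDomain ν₁ ν₂ E) := by
  unfold energyDomain
  measurability

theorem preimage_swap_energyDomain :
    Prod.swap ⁻¹' energyDomain ν₁ ν₂ E = energyDomain ν₁ ν₂ E := by
  ext p
  simp only [energyDomain, mem_preimage, mem_ofPred_eq, Prod.fst_swap, Prod.snd_swap, add_comm p.2,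
    abs_sub_comm p.2]
  tauto

theorem abs_four_mul_sub_le_iff_mem_uIcc (hν : ν₂ ≤ ν₁) (x y : ℝ) :
    |4 * E - (x + y) * (ν₁ + ν₂)| ≤ |x - y| * (ν₁ - ν₂) ↔
      2 * E ∈ uIcc (ν₁ * x + ν₂ * y) (ν₂ * x + ν₁ * y) := by
  rw [← abs_two_mul_sub_add_le_abs_sub_iff, ← abs_of_nonneg (sub_nonneg.2 hν), ← abs_mul]
  ring_nf

theorem energyDomain_inter_setOf_le (hν₂ : 0 < ν₂) (hν : ν₂ < ν₁) :
    energyDomain ν₁ ν₂ E ∩ {p | p.1 ≤ p.2} =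
      {p | p.1 ∈ Ici 1 ∧ p.2 ∈ Icc ((2 * E - ν₂ * p.1) / ν₁) ((2 * E - ν₁ * p.1) / ν₂)} := by
  have hν₁ : 0 < ν₁ := hν₂.trans hν
  ext ⟨x, y⟩
  simp only [energyDomain, mem_inter_iff, mem_ofPred_eq, mem_Ici, mem_Icc,
    abs_four_mul_sub_le_iff_mem_uIcc hν.le, div_le_iff₀ hν₁, le_div_iff₀ hν₂]
  constructor
  · rintro ⟨⟨hx, -, hE⟩, hxy⟩
    rw [uIcc_of_le (by nlinarith), mem_Icc] at hE
    exact ⟨hx, by linarith [hE.1], by linarith [hE.2]⟩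
  · rintro ⟨hx, hlow, hupp⟩
    have hxy : x ≤ y := by nlinarith
    refine ⟨⟨hx, hx.trans hxy, ?_⟩, hxy⟩
    rw [uIcc_of_le (by nlinarith)]
    exact ⟨by linarith, by linarith⟩

end energyDomain

theorem constrained_energy_domain_area (ν₁ ν₂ E : ℝ)
    (h1 : 1 ≤ ν₂) (h2 : ν₂ < ν₁) (hE : ν₁ + ν₂ ≤ 2 * E) :
    volume {p : ℝ × ℝ | 1 ≤ p.1 ∧ 1 ≤ p.2 ∧
        |4 * E - (p.1 + p.2) * (ν₁ + ν₂)| ≤ |p.1 - p.2| * (ν₁ - ν₂)} =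
      ENNReal.ofReal ((ν₁ - ν₂) * (2 * E - (ν₁ + ν₂)) ^ 2 / (ν₁ * ν₂ * (ν₁ + ν₂))) := by
  have hν₂ : 0 < ν₂ := by linarith
  have hν₁ : 0 < ν₁ := by linarith
  have hs : 0 < ν₁ + ν₂ := by linarith
  have hk : 0 ≤ (ν₁ - ν₂) * (ν₁ + ν₂) / (ν₁ * ν₂) := by
    have := sub_pos.2 h2
    positivity
  have hC : 1 ≤ 2 * E / (ν₁ + ν₂) := (le_div_iff₀ hs).2 (by linarith)
  have hgap (x : ℝ) : (2 * E - ν₁ * x) / ν₂ - (2 * E - ν₂ * x) / ν₁ =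
      (ν₁ - ν₂) * (ν₁ + ν₂) / (ν₁ * ν₂) * (2 * E / (ν₁ + ν₂) - x) := by
    field_simp
    ring
  change volume (energyDomain ν₁ ν₂ E) = _
  rw [Measure.volume_eq_prod, Measure.prod_self_eq_two_mul_of_preimage_swap_eq
      measurableSet_energyDomain preimage_swap_energyDomain, energyDomain_inter_setOf_le hν₂ h2,
    volume_region_between_cc_eq_lintegral (f := fun x => (2 * E - ν₂ * x) / ν₁)
      (g := fun x => (2 * E - ν₁ * x) / ν₂) (by fun_prop) (by fun_prop) measurableSet_Ici]
  simp_rw [hgap]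
  rw [lintegral_Ici_ofReal_mul_sub hk hC, ← ENNReal.ofReal_ofNat 2,
    ← ENNReal.ofReal_mul zero_le_two]
  congr 1
  field_simp
end

section
/- Let E_A, E_B ≥ 1 and set E = min{E_A, E_B}. On the region K = {(ν₁, ν₂) ∈ ℝ² : ν₁ ≥ 1, ν₂ ≥ 1, ν₁ + ν₂ ≤ 2E} define f(ν₁, ν₂) = (ν₁ − ν₂)²·(2E_A − ν₁ − ν₂)²·(2E_B − ν₁ − ν₂)². Then: (i) f(ν, ν) = 0 for all ν; and (ii) for every (ν₁, ν₂) ∈ K the point (ν₁ + ν₂ − 1, 1) lies in K and f(ν₁, ν₂) ≤ f(ν₁ + ν₂ − 1, 1). Hence f vanishes on the diagonal and attains its maximum over K at a point where one of the two coordinates equals 1. -/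
/-!
STATEMENT 11: Let `E_A, E_B ≥ 1`, `E = min{E_A, E_B}`.  On
`K = {(ν₁, ν₂) : ν₁ ≥ 1, ν₂ ≥ 1, ν₁ + ν₂ ≤ 2E}` let
`f(ν₁, ν₂) = (ν₁ − ν₂)²·(2E_A − ν₁ − ν₂)²·(2E_B − ν₁ − ν₂)²`.  Then
(i) `f(ν, ν) = 0`; and (ii) for every `(ν₁, ν₂) ∈ K` the point `(ν₁ + ν₂ − 1, 1)` lies
in `K` and `f(ν₁, ν₂) ≤ f(ν₁ + ν₂ − 1, 1)`.  Hence `f` vanishes on the diagonal and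
attains its maximum over `K` at a point where one coordinate equals `1`.
-/

/-- The region `ν₁ ≥ 1, ν₂ ≥ 1, ν₁ + ν₂ ≤ 2E` of allowed symplectic eigenvalues. -/
def Kregion (E : ℝ) : Set (ℝ × ℝ) :=
  {p : ℝ × ℝ | 1 ≤ p.1 ∧ 1 ≤ p.2 ∧ p.1 + p.2 ≤ 2 * E}

/-- The (unnormalized) constrained-energy density of the symplectic eigenvalues
for `2+2` modes. -/
def sympDensity (E_A E_B : ℝ) (p : ℝ × ℝ) : ℝ :=
  (p.1 - p.2) ^ 2 * (2 * E_A - p.1 - p.2) ^ 2 * (2 * E_B - p.1 - p.2) ^ 2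

theorem sympDensity_diag_zero_and_max_on_boundary (E_A E_B : ℝ)
    (hA : 1 ≤ E_A) (hB : 1 ≤ E_B) :
    (∀ ν : ℝ, sympDensity E_A E_B (ν, ν) = 0) ∧
    (∀ p ∈ Kregion (min E_A E_B),
      (p.1 + p.2 - 1, 1) ∈ Kregion (min E_A E_B) ∧
        sympDensity E_A E_B p ≤ sympDensity E_A E_B (p.1 + p.2 - 1, 1)) := by
  constructor
  · intro ν; simp [sympDensity]
  · rintro ⟨x, y⟩ ⟨h1, h2, h3⟩
    simp only [Kregion, Set.mem_setOf_eq] at *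
    refine ⟨⟨by linarith, le_refl 1, by linarith⟩, ?_⟩
    simp only [sympDensity]
    have key : (x - y) ^ 2 ≤ (x + y - 1 - 1) ^ 2 := by nlinarith
    have h4 : (0:ℝ) ≤ (2 * E_A - x - y) ^ 2 * (2 * E_B - x - y) ^ 2 := by positivity
    nlinarith [mul_le_mul_of_nonneg_right key h4]
end
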